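/- arXiv:2004.05088 — 8 statements merged into one kernel-verified Lean document; each statement's English description precedes it below -/
import Mathlib

section
/- For every w > 0 that is not an integer multiple of D, the function P_W is differentiable at w and its derivative there equals f_W(w). -/
open Real MeasureTheory Filter

/-- Stationary waiting-time CDF of the M/D/1 queue (Erlang's formula),
extended by `0` on the negative reals. -/
noncomputable def PW (lam D w : ℝ) : ℝ :=
  if w < 0 then 0 else
    (1 - lam * D) * ∑ k ∈ Finset.range (⌊w / D⌋₊ + 1),
      (-(lam * (w - (k : ℝ) * D))) ^ k * Real.exp (lam * (w - (k : ℝ) * D)) /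
        (Nat.factorial k)

/-- Continuous part of the stationary waiting-time density of the M/D/1 queue. -/
noncomputable def fW (lam D w : ℝ) : ℝ :=
  (1 - lam * D) * (lam * Real.exp (lam * w) +
    ∑ k ∈ Finset.Icc 1 ⌊w / D⌋₊,
      (-lam) ^ k * (w - (k : ℝ) * D) ^ (k - 1) * Real.exp (lam * (w - (k : ℝ) * D)) *
        ((k : ℝ) + lam * (w - (k : ℝ) * D)) / (Nat.factorial k))

/-!
Off the multiples of `D` the summation bound `⌊x / D⌋₊` is locally constant, so near `w` the CDF
`PW` is a fixed finite sum of the terms `(-λ(x - kD))^k e^{λ(x - kD)} / k!`, differentiated termwise.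
The `k = 0` term gives `λ e^{λw}`, and for `k ≥ 1` the product rule on `u^k e^{λu}` gives
`u^(k-1) e^{λu} (k + λu)`, the `k`-th summand of `fW`.
-/

open Topology Finset Nat

theorem Nat.floor_eventually_eq {y : ℝ} (hy : 0 ≤ y) (hnat : ∀ n : ℕ, y ≠ n) :
    ∀ᶠ x in 𝓝 y, ⌊x⌋₊ = ⌊y⌋₊ := by
  have hlow : (⌊y⌋₊ : ℝ) < y := (Nat.floor_le hy).lt_of_ne (hnat _).symm
  filter_upwards [Ioo_mem_nhds hlow (Nat.lt_floor_add_one y)] with x hx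
  exact Nat.floor_eq_on_Ico _ _ ⟨hx.1.le, hx.2⟩

theorem Finset.sum_range_succ_eq_add_sum_Icc {M : Type*} [AddCommMonoid M] (f : ℕ → M) (n : ℕ) :
    ∑ k ∈ range (n + 1), f k = f 0 + ∑ k ∈ Icc 1 n, f k := by
  rw [Nat.range_succ_eq_Icc_zero, ← insert_Icc_add_one_left_eq_Icc n.zero_le,
    sum_insert (by simp), zero_add]

theorem hasDerivAt_pow_mul_exp (lam : ℝ) {k : ℕ} (hk : 1 ≤ k) (u : ℝ) :
    HasDerivAt (fun u => u ^ k * exp (lam * u))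
      (u ^ (k - 1) * exp (lam * u) * (k + lam * u)) u := by
  have hexp : HasDerivAt (fun u => exp (lam * u)) (exp (lam * u) * lam) u :=
    ((hasDerivAt_id u).const_mul lam).exp.congr_deriv (by simp)
  refine ((hasDerivAt_pow k u).mul hexp).congr_deriv ?_
  rw [← pow_sub_one_mul (by omega : k ≠ 0) u]
  ring

noncomputable def erlangTerm (lam D : ℝ) (k : ℕ) (x : ℝ) : ℝ :=
  (-(lam * (x - k * D))) ^ k * exp (lam * (x - k * D)) / k !

theorem PW_of_nonneg (lam D : ℝ) {x : ℝ} (hx : 0 ≤ x) :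
    PW lam D x = (1 - lam * D) * ∑ k ∈ range (⌊x / D⌋₊ + 1), erlangTerm lam D k x :=
  if_neg hx.not_gt

theorem hasDerivAt_erlangTerm_zero (lam D x : ℝ) :
    HasDerivAt (erlangTerm lam D 0) (lam * exp (lam * x)) x := by
  have : erlangTerm lam D 0 = fun x => exp (lam * x) := by
    funext x; simp [erlangTerm]
  rw [this]
  exact ((hasDerivAt_id x).const_mul lam).exp.congr_deriv (by simp [mul_comm])

theorem hasDerivAt_erlangTerm (lam D : ℝ) {k : ℕ} (hk : 1 ≤ k) (x : ℝ) :
    HasDerivAt (erlangTerm lam D k)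
      ((-lam) ^ k * (x - k * D) ^ (k - 1) * exp (lam * (x - k * D)) *
        (k + lam * (x - k * D)) / k !) x := by
  have : erlangTerm lam D k =
      fun x => (-lam) ^ k / k ! * ((x - k * D) ^ k * exp (lam * (x - k * D))) := by
    funext x
    rw [erlangTerm, neg_mul_eq_neg_mul, mul_pow]
    ring
  rw [this]
  refine (((hasDerivAt_pow_mul_exp lam hk (x - k * D)).comp_sub_const x (k * D)).const_mul
    ((-lam) ^ k / k !)).congr_deriv ?_
  ring

theorem md1_cdf_hasDerivAt_general (lam D : ℝ) (hD : 0 < D)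
    (w : ℝ) (hw : 0 < w) (hmult : ∀ n : ℕ, w ≠ (n : ℝ) * D) :
    HasDerivAt (fun x => PW lam D x) (fW lam D w) w := by
  set N := ⌊w / D⌋₊
  have hfloor : ∀ᶠ x in 𝓝 w, ⌊x / D⌋₊ = N :=
    (tendsto_id.div_const D).eventually <|
      Nat.floor_eventually_eq (by positivity) fun n h => hmult n <| by
        rw [← h, div_mul_cancel₀ w hD.ne']
  have hPW : (fun x => (1 - lam * D) * (erlangTerm lam D 0 x +
      ∑ k ∈ Icc 1 N, erlangTerm lam D k x)) =ᶠ[𝓝 w] fun x => PW lam D x := by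
    filter_upwards [hfloor, lt_mem_nhds hw] with x hxN hx
    rw [PW_of_nonneg lam D hx.le, hxN, sum_range_succ_eq_add_sum_Icc]
  refine HasDerivAt.congr_of_eventuallyEq ?_ hPW.symm
  exact ((hasDerivAt_erlangTerm_zero lam D w).add <| HasDerivAt.fun_sum fun k hk =>
    hasDerivAt_erlangTerm lam D (mem_Icc.1 hk).1 w).const_mul _

/-- for every `w > 0` that is not an integer multiple of `D`, the
M/D/1 waiting-time CDF `P_W` is differentiable at `w` with derivative `f_W w`. -/
theorem md1_cdf_hasDerivAt (lam D : ℝ) (hlam : 0 < lam) (hD : 0 < D)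
    (hstab : lam * D < 1) (w : ℝ) (hw : 0 < w) (hmult : ∀ n : ℕ, w ≠ (n : ℝ) * D) :
    HasDerivAt (fun x => PW lam D x) (fW lam D w) w :=
  md1_cdf_hasDerivAt_general lam D hD w hw hmult
end

section
/- The function P_W is monotone nondecreasing on [0, ∞). -/
open Real MeasureTheory Filter

/-!
Expanding each exponential in Erlang's formula and collecting powers of `λ` gives, for `w ≥ 0`,
`P_W(w) = (1 - λD) ∑ₘ λᵐ uₘ(w) / m!`, where `uₘ = posPowDiff D m` is the `m`-th backward
difference with step `D` of `x ↦ max x 0 ^ m`; for `m ≥ 1`, `uₘ / (m! Dᵐ)` is the CDF of a sum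
of `m` independent uniforms on `[0, D]` (the Pollaczek–Khinchine series). Each `uₘ` is
nondecreasing: `u₀ = 1`, `u₁ = min (max w 0) D`, and by Pascal's rule
`u_{m+2}'(w) = (m + 2) (u_{m+1}(w) - u_{m+1}(w - D))`, which is `≥ 0` by induction on `m`.
Since `λ > 0` and `λD < 1`, all coefficients of the series are nonnegative.
-/

open Finset
open scoped Nat Topology

theorem hasDerivAt_max_zero_pow (n : ℕ) (x : ℝ) :
    HasDerivAt (fun x : ℝ => max x 0 ^ (n + 2)) ((n + 2) * max x 0 ^ (n + 1)) x := by
  refine hasDerivAt_of_hasDerivAt_of_ne' (x := 0) (fun y hy => ?_)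
    (by fun_prop : Continuous fun x : ℝ => max x 0 ^ (n + 2)).continuousAt
    (by fun_prop : Continuous fun x : ℝ => ((n : ℝ) + 2) * max x 0 ^ (n + 1)).continuousAt x
  rcases hy.lt_or_gt with hy | hy
  · have hzero : (fun x : ℝ => max x 0 ^ (n + 2)) =ᶠ[𝓝 y] fun _ => 0 := by
      filter_upwards [Iio_mem_nhds hy] with z hz
      simp [max_eq_right (Set.mem_Iio.1 hz).le]
    simpa [max_eq_right hy.le] using (hasDerivAt_const y (0 : ℝ)).congr_of_eventuallyEq hzero
  · have hpow : (fun x : ℝ => max x 0 ^ (n + 2)) =ᶠ[𝓝 y] fun x => x ^ (n + 2) := by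
      filter_upwards [Ioi_mem_nhds hy] with z hz
      rw [max_eq_left (Set.mem_Ioi.1 hz).le]
    simpa [max_eq_left hy.le] using (hasDerivAt_pow (n + 2) y).congr_of_eventuallyEq hpow

theorem sum_range_succ_neg_one_pow_mul_choose {R : Type*} [Ring R] (f : ℕ → R) (n : ℕ) :
    ∑ k ∈ range (n + 2), (-1) ^ k * ((n + 1).choose k : R) * f k =
      ∑ k ∈ range (n + 1), (-1) ^ k * (n.choose k : R) * (f k - f (k + 1)) := by
  have hshift : ∑ k ∈ range (n + 1), (-1) ^ (k + 1) * (n.choose (k + 1) : R) * f (k + 1) + f 0 =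
      ∑ k ∈ range (n + 1), (-1) ^ k * (n.choose k : R) * f k := by
    rw [sum_range_succ (fun k => (-1) ^ (k + 1) * (n.choose (k + 1) : R) * f (k + 1)),
      Nat.choose_succ_self, Nat.cast_zero, mul_zero, zero_mul, add_zero]
    simpa using (sum_range_succ' (fun k => (-1) ^ k * (n.choose k : R) * f k) n).symm
  simp only [mul_sub, sum_sub_distrib]
  rw [← hshift, sum_range_succ']
  simp only [Nat.choose_succ_succ', Nat.cast_add, mul_add, add_mul, sum_add_distrib, pow_succ,
    mul_neg_one, neg_mul, sum_neg_distrib]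
  simp only [pow_zero, Nat.choose_zero_right, Nat.cast_one, mul_one, one_mul]
  abel

theorem hasSum_choose_mul_pow_div_factorial (k : ℕ) (x : ℝ) :
    HasSum (fun m => (m.choose k : ℝ) * x ^ m / m !) (x ^ k / k ! * exp x) := by
  rw [← hasSum_nat_add_iff' k]
  have hvanish : ∑ i ∈ range k, (i.choose k : ℝ) * x ^ i / i ! = 0 :=
    sum_eq_zero fun i hi => by simp [Nat.choose_eq_zero_of_lt (mem_range.1 hi)]
  rw [hvanish, sub_zero]
  have hexp : HasSum (fun i => x ^ i / i !) (exp x) := by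
    rw [Real.exp_eq_exp_ℝ]; exact NormedSpace.expSeries_div_hasSum_exp x
  refine (hexp.mul_left (x ^ k / k !)).congr_fun fun i => ?_
  rw [← Nat.add_choose_mul_factorial_mul_factorial i k]
  have hchoose : ((i + k).choose k : ℝ) ≠ 0 := by
    exact_mod_cast (Nat.choose_pos (Nat.le_add_left k i)).ne'
  push_cast
  field_simp
  ring

noncomputable def posPowDiff (D : ℝ) (m : ℕ) (w : ℝ) : ℝ :=
  ∑ k ∈ range (m + 1), (-1) ^ k * m.choose k * max (w - k * D) 0 ^ m

theorem posPowDiff_one {D : ℝ} (hD : 0 ≤ D) : posPowDiff D 1 = fun w => min (max w 0) D := by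
  funext w
  simp only [posPowDiff, sum_range_succ, sum_range_zero]
  rcases le_total w 0 with hw | hw
  · simp [max_eq_right hw, max_eq_right (by linarith : w - D ≤ 0), hD]
  rcases le_total w D with hwD | hwD <;> simp [max_eq_left hw, hwD]

theorem hasDerivAt_posPowDiff (D : ℝ) (m : ℕ) (w : ℝ) :
    HasDerivAt (posPowDiff D (m + 2))
      ((m + 2) * (posPowDiff D (m + 1) w - posPowDiff D (m + 1) (w - D))) w := by
  have hsum : HasDerivAt (posPowDiff D (m + 2)) (∑ k ∈ range (m + 3),
      (-1) ^ k * (m + 2).choose k * ((m + 2) * max (w - k * D) 0 ^ (m + 1))) w :=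
    HasDerivAt.fun_sum fun k _ => ((hasDerivAt_max_zero_pow m (w - k * D)).comp_sub_const w
      (k * D)).const_mul _
  refine hsum.congr_deriv ?_
  have hshift (k : ℕ) : w - D - k * D = w - (k + 1 : ℕ) * D := by push_cast; ring
  simp only [posPowDiff, hshift, ← sum_sub_distrib, ← mul_sub]
  rw [← sum_range_succ_neg_one_pow_mul_choose (fun k => max (w - k * D) 0 ^ (m + 1)), mul_sum]
  exact sum_congr rfl fun k _ => by ring

theorem posPowDiff_monotone {D : ℝ} (hD : 0 ≤ D) : ∀ m, Monotone (posPowDiff D m)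
  | 0 => fun a b _ => by simp [posPowDiff]
  | 1 => by simpa [posPowDiff_one hD] using (monotone_id.max monotone_const).min monotone_const
  | m + 2 => by
    refine monotone_of_deriv_nonneg (fun w => (hasDerivAt_posPowDiff D m w).differentiableAt)
      fun w => ?_
    rw [(hasDerivAt_posPowDiff D m w).deriv]
    exact mul_nonneg (by positivity)
      (sub_nonneg.2 (posPowDiff_monotone hD (m + 1) (by linarith : w - D ≤ w)))

theorem sum_range_floor_eq_posPowDiff {D w : ℝ} (hD : 0 < D) (hw : 0 ≤ w) (m : ℕ) :
    ∑ k ∈ range (⌊w / D⌋₊ + 1), (-1) ^ k * m.choose k * (w - k * D) ^ m = posPowDiff D m w := by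
  have hfloor (k : ℕ) : k ≤ ⌊w / D⌋₊ ↔ k * D ≤ w := by
    rw [Nat.le_floor_iff (div_nonneg hw hD.le), le_div_iff₀ hD]
  set t : ℕ → ℝ := fun k => (-1) ^ k * m.choose k * max (w - k * D) 0 ^ m
  calc ∑ k ∈ range (⌊w / D⌋₊ + 1), (-1) ^ k * m.choose k * (w - k * D) ^ m
      = ∑ k ∈ range (⌊w / D⌋₊ + 1), t k := sum_congr rfl fun k hk => by
        have hkD : k * D ≤ w := (hfloor k).1 (Nat.lt_succ_iff.1 (mem_range.1 hk))
        simp only [t, max_eq_left (sub_nonneg.2 hkD)]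
    _ = ∑' k, t k := by
        refine (tsum_eq_sum fun k hk => ?_).symm
        have hnk : ⌊w / D⌋₊ < k := by simpa using hk
        have hwk : w - k * D ≤ 0 := by linarith [(hfloor k).not.1 hnk.not_ge]
        rcases lt_or_ge m k with hmk | hkm
        · simp [t, Nat.choose_eq_zero_of_lt hmk]
        · simp [t, max_eq_right hwk, show m ≠ 0 by omega]
    _ = posPowDiff D m w := tsum_eq_sum fun k hk => by
        simp [t, Nat.choose_eq_zero_of_lt (by simpa using hk : m < k)]

theorem hasSum_PW {lam D w : ℝ} (hD : 0 < D) (hw : 0 ≤ w) :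
    HasSum (fun m : ℕ => (1 - lam * D) * lam ^ m * posPowDiff D m w / m !) (PW lam D w) := by
  have hterm (k : ℕ) : HasSum (fun m => (-1) ^ k * (m.choose k * (lam * (w - k * D)) ^ m / m !))
      ((-(lam * (w - k * D))) ^ k * exp (lam * (w - k * D)) / k !) := by
    rw [neg_pow (lam * _), mul_assoc, mul_div_assoc, mul_div_right_comm]
    exact (hasSum_choose_mul_pow_div_factorial k _).mul_left ((-1) ^ k)
  rw [PW, if_neg (not_lt.2 hw)]
  refine ((hasSum_sum fun k _ => hterm k).mul_left (1 - lam * D)).congr_fun fun m => ?_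
  rw [← sum_range_floor_eq_posPowDiff hD hw, mul_sum, sum_div, mul_sum]
  exact sum_congr rfl fun k _ => by rw [mul_pow]; ring

/-- the M/D/1 waiting-time CDF `P_W` is monotone nondecreasing on `[0, ∞)`. -/
theorem md1_cdf_monotoneOn (lam D : ℝ) (hlam : 0 < lam) (hD : 0 < D)
    (hstab : lam * D < 1) :
    MonotoneOn (PW lam D) (Set.Ici (0 : ℝ)) := by
  intro a ha b hb hab
  refine hasSum_le (fun m => ?_) (hasSum_PW hD ha) (hasSum_PW hD hb)
  have hmono := posPowDiff_monotone hD.le m hab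
  have hstab' : 0 ≤ 1 - lam * D := by linarith
  gcongr
end

section
/- For every M > 0 and every real β with β ≠ 0 and β ≠ −λ, one has ∫₀^M f_W(w) e^{βw} dw = (1 − λD) · ( λ(e^{(λ+β)M} − 1)/(λ+β) + Σ_{k=1}^{⌊M/D⌋} e^{βkD} · ( βλ^k/(λ+β)^{k+1} − e^{(λ+β)(M−kD)} · ( (−λ)^{k+1}(M−kD)^k/((λ+β)·k!) + Σ_{j=0}^{k−1} λ^k β (kD−M)^j/((λ+β)^{k−j+1} · j!) ) ) ). -/
/-!
On `[0, M]` the `k`-th summand of `f_W` is supported on `[kD, M]`, so `θ(M, β)` splits into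
`λ ∫₀^M e^{(λ+β)w} dw` plus one integral over `[kD, M]` for each `k ≤ ⌊M/D⌋`. After the shift
`t = w - kD`, the `k`-th integrand has an explicit primitive: up to a monomial term, it is
`e^{(λ+β)t}` times the truncated exponential series `∑_{j<k} (-(λ+β)t)^j / j!`, whose derivative
telescopes to a single monomial.
-/

open Real MeasureTheory Filter

open Set intervalIntegral
open scoped Nat

theorem integral_indicator_Ici {f : ℝ → ℝ} {a b c : ℝ} (hac : a ≤ c) (hcb : c ≤ b) :
    ∫ x in a..b, (Ici c).indicator f x = ∫ x in c..b, f x := by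
  calc ∫ x in a..b, (Ici c).indicator f x = ∫ x in a..b, (Ioi c).indicator f x :=
        integral_congr_ae <| (indicator_ae_eq_of_ae_eq_set Ioi_ae_eq_Ici.symm).mono
          fun x hx _ => hx
    _ = ∫ x in Ioc c b, f x := by
      rw [integral_of_le (hac.trans hcb), MeasureTheory.integral_indicator measurableSet_Ioi,
        Measure.restrict_restrict measurableSet_Ioi, inter_comm, Ioc_inter_Ioi, sup_of_le_right hac]
    _ = ∫ x in c..b, f x := (integral_of_le hcb).symm

section FloorSum

variable (g : ℕ → ℝ → ℝ) (m : ℕ) {D M : ℝ}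

theorem eqOn_sum_Icc_floor_div (hD : 0 < D) (hM : 0 ≤ M) :
    EqOn (fun w => ∑ k ∈ Finset.Icc m ⌊w / D⌋₊, g k w)
      (fun w => ∑ k ∈ Finset.Icc m ⌊M / D⌋₊, (Ici (k * D)).indicator (g k) w) (uIcc 0 M) := by
  intro w hw
  rw [uIcc_of_le hM] at hw
  have hIcc : Finset.Icc m ⌊w / D⌋₊ =
      (Finset.Icc m ⌊M / D⌋₊).filter fun k : ℕ => (k : ℝ) * D ≤ w := by
    ext k
    simp only [Finset.mem_Icc, Finset.mem_filter, Nat.le_floor_iff (div_nonneg hw.1 hD.le),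
      Nat.le_floor_iff (div_nonneg hM hD.le), le_div_iff₀ hD]
    exact ⟨fun h => ⟨⟨h.1, h.2.trans hw.2⟩, h.2⟩, fun h => ⟨h.1.1, h.2⟩⟩
  simp only [hIcc, Finset.sum_filter, indicator_apply, mem_Ici]

theorem intervalIntegrable_indicator_Ici {f : ℝ → ℝ} (hf : Continuous f) (a b c : ℝ) :
    IntervalIntegrable ((Ici c).indicator f) volume a b :=
  intervalIntegrable_iff.2 (hf.integrableOn_uIoc.indicator measurableSet_Ici)

theorem intervalIntegrable_sum_Icc_floor_div (hg : ∀ k, Continuous (g k)) (hD : 0 < D)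
    (hM : 0 ≤ M) :
    IntervalIntegrable (fun w => ∑ k ∈ Finset.Icc m ⌊w / D⌋₊, g k w) volume 0 M := by
  refine (intervalIntegrable_congr
    ((eqOn_sum_Icc_floor_div g m hD hM).symm.mono uIoc_subset_uIcc)).1 ?_
  simpa only [Finset.sum_fn] using IntervalIntegrable.sum (Finset.Icc m ⌊M / D⌋₊)
    fun k _ => intervalIntegrable_indicator_Ici (hg k) 0 M (k * D)

theorem integral_sum_Icc_floor_div (hg : ∀ k, Continuous (g k)) (hD : 0 < D) (hM : 0 ≤ M) :
    ∫ w in 0..M, ∑ k ∈ Finset.Icc m ⌊w / D⌋₊, g k w =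
      ∑ k ∈ Finset.Icc m ⌊M / D⌋₊, ∫ w in k * D..M, g k w := by
  rw [integral_congr (eqOn_sum_Icc_floor_div g m hD hM), intervalIntegral.integral_finsetSum
    fun k _ => intervalIntegrable_indicator_Ici (hg k) 0 M (k * D)]
  refine Finset.sum_congr rfl fun k hk => integral_indicator_Ici (by positivity) ?_
  have hk := (Finset.mem_Icc.mp hk).2
  rwa [Nat.le_floor_iff (div_nonneg hM hD.le), le_div_iff₀ hD] at hk

end FloorSum

theorem hasDerivAt_exp_mul_mul_sum_range (a t : ℝ) (n : ℕ) :
    HasDerivAt (fun t => exp (a * t) * ∑ j ∈ Finset.range (n + 1), (-(a * t)) ^ j / j !)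
      (a * exp (a * t) * (-(a * t)) ^ n / n !) t := by
  have hexp : HasDerivAt (fun t => exp (a * t)) (exp (a * t) * a) t := by
    simpa using ((hasDerivAt_id t).const_mul a).exp
  induction n with
  | zero => simpa [mul_comm] using hexp
  | succ n ih =>
    have hpow : HasDerivAt (fun t => (-(a * t)) ^ (n + 1) / (n + 1)!)
        ((n + 1) * (-(a * t)) ^ n * (-a) / (n + 1)!) t := by
      simpa using (((hasDerivAt_id t).const_mul a).neg.pow (n + 1)).div_const _
    simp only [Finset.sum_range_succ _ (n + 1), mul_add]
    refine (ih.add (hexp.mul hpow)).congr_deriv ?_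
    rw [Nat.factorial_succ]
    push_cast
    field_simp
    ring

section Kernel

variable (lam β : ℝ)

/-- The `k`-th summand of `fW lam D w` (without the factor `1 - lam * D`) is
`md1Kernel lam k (w - k * D)`. -/
noncomputable def md1Kernel (k : ℕ) (t : ℝ) : ℝ :=
  (-lam) ^ k * t ^ (k - 1) * exp (lam * t) * (k + lam * t) / k !

noncomputable def md1KernelPrimitive (k : ℕ) (t : ℝ) : ℝ :=
  -(exp ((lam + β) * t) * ((-lam) ^ (k + 1) * t ^ k / ((lam + β) * k !) +
    ∑ j ∈ Finset.range k, lam ^ k * β * (-t) ^ j / ((lam + β) ^ (k - j + 1) * j !)))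

@[fun_prop]
theorem continuous_md1Kernel (k : ℕ) : Continuous (md1Kernel lam k) := by
  unfold md1Kernel
  fun_prop

variable {lam β}

theorem md1KernelPrimitive_succ_eq (ha : lam + β ≠ 0) (n : ℕ) (t : ℝ) :
    md1KernelPrimitive lam β (n + 1) t =
      -((-lam) ^ (n + 2) / ((lam + β) * (n + 1)!)) * (t ^ (n + 1) * exp ((lam + β) * t)) -
        lam ^ (n + 1) * β / (lam + β) ^ (n + 2) * (exp ((lam + β) * t) *
          ∑ j ∈ Finset.range (n + 1), (-((lam + β) * t)) ^ j / j !) := by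
  have hsum : ∀ j ∈ Finset.range (n + 1),
      lam ^ (n + 1) * β * (-t) ^ j / ((lam + β) ^ (n + 1 - j + 1) * j !) =
        lam ^ (n + 1) * β / (lam + β) ^ (n + 2) * ((-((lam + β) * t)) ^ j / j !) := by
    intro j hj
    have hpow : (lam + β) ^ (n + 2) = (lam + β) ^ (n + 1 - j + 1) * (lam + β) ^ j := by
      rw [← pow_add]
      have := Finset.mem_range.mp hj
      congr 1
      omega
    rw [hpow, neg_mul_eq_mul_neg, mul_pow]
    field_simp
  rw [md1KernelPrimitive, Finset.sum_congr rfl hsum, ← Finset.mul_sum]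
  ring

theorem md1KernelPrimitive_zero {k : ℕ} (hk : k ≠ 0) :
    md1KernelPrimitive lam β k 0 = -(β * lam ^ k / (lam + β) ^ (k + 1)) := by
  obtain ⟨n, rfl⟩ := Nat.exists_eq_add_one_of_ne_zero hk
  simp [md1KernelPrimitive, Finset.sum_range_succ', mul_comm]

theorem hasDerivAt_md1KernelPrimitive (ha : lam + β ≠ 0) {k : ℕ} (hk : k ≠ 0) (t : ℝ) :
    HasDerivAt (md1KernelPrimitive lam β k) (md1Kernel lam k t * exp (β * t)) t := by
  obtain ⟨n, rfl⟩ := Nat.exists_eq_add_one_of_ne_zero hk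
  have hexp : HasDerivAt (fun t => exp ((lam + β) * t)) (exp ((lam + β) * t) * (lam + β)) t := by
    simpa using ((hasDerivAt_id t).const_mul (lam + β)).exp
  rw [funext (md1KernelPrimitive_succ_eq ha n)]
  refine ((((hasDerivAt_pow (n + 1) t).mul hexp).const_mul _).sub
    ((hasDerivAt_exp_mul_mul_sum_range (lam + β) t n).const_mul _)).congr_deriv ?_
  rw [md1Kernel, show lam * t = (lam + β) * t - β * t by ring, exp_sub, Nat.factorial_succ,
    neg_pow ((lam + β) * t), mul_pow]
  push_cast
  field_simp
  ring

theorem integral_md1Kernel_sub_mul_exp (ha : lam + β ≠ 0) {k : ℕ} (hk : k ≠ 0) (c M : ℝ) :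
    ∫ w in c..M, md1Kernel lam k (w - c) * exp (β * w) =
      exp (β * c) * (md1KernelPrimitive lam β k (M - c) - md1KernelPrimitive lam β k 0) := by
  have hshift : ∀ w, md1Kernel lam k (w - c) * exp (β * w) =
      exp (β * c) * (md1Kernel lam k (w - c) * exp (β * (w - c))) := by
    intro w
    rw [mul_left_comm, ← exp_add]
    ring_nf
  simp_rw [hshift]
  rw [intervalIntegral.integral_const_mul,
    integral_comp_sub_right (fun t => md1Kernel lam k t * exp (β * t)), sub_self,
    integral_eq_sub_of_hasDerivAt (fun t _ => hasDerivAt_md1KernelPrimitive ha hk t)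
      (Continuous.intervalIntegrable (by fun_prop) _ _)]

end Kernel

theorem integral_const_mul_exp_mul {a : ℝ} (ha : a ≠ 0) (c M : ℝ) :
    ∫ w in 0..M, c * exp (a * w) = c * (exp (a * M) - 1) / a := by
  rw [intervalIntegral.integral_const_mul, integral_comp_mul_left (fun w => exp w) ha,
    integral_exp, mul_zero, exp_zero, smul_eq_mul]
  field_simp

theorem md1_theta_formula_general (lam D : ℝ) (hD : 0 < D) (M : ℝ) (hM : 0 < M) (β : ℝ)
    (hβl : β ≠ -lam) :
    ∫ w in (0:ℝ)..M, fW lam D w * Real.exp (β * w) =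
      (1 - lam * D) * (lam * (Real.exp ((lam + β) * M) - 1) / (lam + β) +
        ∑ k ∈ Finset.Icc 1 ⌊M / D⌋₊,
          Real.exp (β * (k : ℝ) * D) *
            (β * lam ^ k / (lam + β) ^ (k + 1) -
              Real.exp ((lam + β) * (M - (k : ℝ) * D)) *
                ((-lam) ^ (k + 1) * (M - (k : ℝ) * D) ^ k /
                    ((lam + β) * (Nat.factorial k)) +
                  ∑ j ∈ Finset.range k,
                    lam ^ k * β * ((k : ℝ) * D - M) ^ j /
                      ((lam + β) ^ (k - j + 1) * (Nat.factorial j))))) := by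
  have ha : lam + β ≠ 0 := fun h => hβl (by linarith)
  have hg : ∀ k : ℕ, Continuous fun w => md1Kernel lam k (w - k * D) * exp (β * w) := by
    fun_prop
  have hsplit : ∀ w, fW lam D w * exp (β * w) = (1 - lam * D) * (lam * exp ((lam + β) * w) +
      ∑ k ∈ Finset.Icc 1 ⌊w / D⌋₊, md1Kernel lam k (w - k * D) * exp (β * w)) := by
    intro w
    rw [fW, mul_assoc, add_mul, Finset.sum_mul, add_mul, exp_add]
    simp only [md1Kernel]
    ring
  simp_rw [hsplit]
  rw [intervalIntegral.integral_const_mul,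
    integral_add (Continuous.intervalIntegrable (by fun_prop) 0 M)
      (intervalIntegrable_sum_Icc_floor_div _ 1 hg hD hM.le),
    integral_sum_Icc_floor_div _ 1 hg hD hM.le, integral_const_mul_exp_mul ha]
  congr 2
  refine Finset.sum_congr rfl fun k hk => ?_
  have hk0 : k ≠ 0 := Nat.one_le_iff_ne_zero.mp (Finset.mem_Icc.mp hk).1
  rw [integral_md1Kernel_sub_mul_exp ha hk0, md1KernelPrimitive_zero hk0, md1KernelPrimitive,
    neg_sub, mul_assoc]
  ring

/-- closed form of the auxiliary function
`θ(M, β) = ∫₀^M f_W(w) e^{β w} dw` for `β ≠ 0`, `β ≠ -λ`. -/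
theorem md1_theta_formula (lam D : ℝ) (hlam : 0 < lam) (hD : 0 < D)
    (hstab : lam * D < 1) (M : ℝ) (hM : 0 < M) (β : ℝ) (hβ0 : β ≠ 0) (hβl : β ≠ -lam) :
    ∫ w in (0:ℝ)..M, fW lam D w * Real.exp (β * w) =
      (1 - lam * D) * (lam * (Real.exp ((lam + β) * M) - 1) / (lam + β) +
        ∑ k ∈ Finset.Icc 1 ⌊M / D⌋₊,
          Real.exp (β * (k : ℝ) * D) *
            (β * lam ^ k / (lam + β) ^ (k + 1) -
              Real.exp ((lam + β) * (M - (k : ℝ) * D)) *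
                ((-lam) ^ (k + 1) * (M - (k : ℝ) * D) ^ k /
                    ((lam + β) * (Nat.factorial k)) +
                  ∑ j ∈ Finset.range k,
                    lam ^ k * β * ((k : ℝ) * D - M) ^ j /
                      ((lam + β) ^ (k - j + 1) * (Nat.factorial j))))) :=
  md1_theta_formula_general lam D hD M hM β hβl
end

section
/- For every M > 0, one has ∫₀^M f_W(w) e^{−λw} dw = (1 − λD) · ( λM + Σ_{k=1}^{⌊M/D⌋} e^{−λkD} (−λ)^k ( (M−kD)^k/k! + λ(M−kD)^{k+1}/(k+1)! ) ). -/
open Real MeasureTheory Filter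

/-!
On the `n`-th piece `n D ≤ w < (n + 1) D` the floor `⌊w / D⌋₊` is constant, so there
the exponentials cancel and `f_W(w) e^{-λw}` is a polynomial in `w` with an explicit primitive.
The primitives of consecutive pieces agree at the breakpoint `(n + 1) D`, because the term
added on the new piece vanishes there to order `n + 1`; the integral over `[0, M]` therefore
telescopes to the primitive of the last piece evaluated at `M`.
-/

section FloorPieces

variable {f : ℝ → ℝ} {F g : ℕ → ℝ → ℝ} {D : ℝ}

lemma ae_eq_on_floor_piece (hD : 0 < D) (hfg : ∀ x, f x = g ⌊x / D⌋₊ x) {n : ℕ} {a b : ℝ}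
    (ha : n * D ≤ a) (hab : a ≤ b) (hb : b ≤ (n + 1) * D) :
    ∀ᵐ x, x ∈ Set.uIoc a b → f x = g n x := by
  filter_upwards [Measure.ae_ne volume ((n + 1) * D)] with x hx hmem
  rw [Set.uIoc_of_le hab] at hmem
  have hxD : x < (n + 1) * D := lt_of_le_of_ne (hmem.2.trans hb) hx
  have hfloor : ⌊x / D⌋₊ = n := by
    rw [Nat.floor_eq_iff (div_nonneg (by nlinarith [hmem.1]) hD.le), le_div_iff₀ hD,
      div_lt_iff₀ hD]
    exact ⟨by linarith [hmem.1], hxD⟩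
  rw [hfg x, hfloor]

lemma integral_on_floor_piece (hD : 0 < D) (hF : ∀ n x, HasDerivAt (F n) (g n x) x)
    (hg : ∀ n, Continuous (g n)) (hfg : ∀ x, f x = g ⌊x / D⌋₊ x) {n : ℕ} {a b : ℝ}
    (ha : n * D ≤ a) (hab : a ≤ b) (hb : b ≤ (n + 1) * D) :
    IntervalIntegrable f volume a b ∧ ∫ x in a..b, f x = F n b - F n a := by
  have hae := ae_eq_on_floor_piece hD hfg ha hab hb
  have hgi : IntervalIntegrable (g n) volume a b := (hg n).intervalIntegrable a b
  refine ⟨hgi.congr_ae ?_, ?_⟩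
  · exact Filter.EventuallyEq.symm ((ae_restrict_iff' measurableSet_uIoc).mpr hae)
  · rw [intervalIntegral.integral_congr_ae hae]
    exact intervalIntegral.integral_eq_sub_of_hasDerivAt (fun x _ => hF n x) hgi

lemma integral_zero_of_mem_floor_piece (hD : 0 < D) (hF : ∀ n x, HasDerivAt (F n) (g n x) x)
    (hg : ∀ n, Continuous (g n)) (hfg : ∀ x, f x = g ⌊x / D⌋₊ x)
    (hjump : ∀ n : ℕ, F (n + 1) ((n + 1) * D) = F n ((n + 1) * D)) (n : ℕ) {M : ℝ}
    (hnM : n * D ≤ M) (hMn : M ≤ (n + 1) * D) :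
    IntervalIntegrable f volume 0 M ∧ ∫ x in 0..M, f x = F n M - F 0 0 := by
  induction n generalizing M with
  | zero =>
    simp only [Nat.cast_zero, zero_mul, zero_add, one_mul] at hnM hMn
    exact integral_on_floor_piece hD hF hg hfg (by simp) hnM (by simpa using hMn)
  | succ m ih =>
    push_cast at hnM hMn
    obtain ⟨hint₁, hval₁⟩ := ih (M := (m + 1) * D) (by nlinarith) le_rfl
    obtain ⟨hint₂, hval₂⟩ :=
      integral_on_floor_piece hD hF hg hfg (n := m + 1) (by push_cast; rfl) hnM
        (by push_cast; linarith)
    refine ⟨hint₁.trans hint₂, ?_⟩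
    rw [← intervalIntegral.integral_add_adjacent_intervals hint₁ hint₂, hval₁, hval₂, hjump]
    ring

lemma integral_zero_eq_floor_pieces (hD : 0 < D) (hF : ∀ n x, HasDerivAt (F n) (g n x) x)
    (hg : ∀ n, Continuous (g n)) (hfg : ∀ x, f x = g ⌊x / D⌋₊ x)
    (hjump : ∀ n : ℕ, F (n + 1) ((n + 1) * D) = F n ((n + 1) * D)) {M : ℝ} (hM : 0 ≤ M) :
    ∫ x in 0..M, f x = F ⌊M / D⌋₊ M - F 0 0 := by
  have hMD : 0 ≤ M / D := div_nonneg hM hD.le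
  refine (integral_zero_of_mem_floor_piece hD hF hg hfg hjump _ ?_ ?_).2
  · exact (le_div_iff₀ hD).mp (Nat.floor_le hMD)
  · exact ((div_lt_iff₀ hD).mp (Nat.lt_floor_add_one _)).le

end FloorPieces

lemma hasDerivAt_pow_succ_sub_div_factorial (c x : ℝ) (k : ℕ) :
    HasDerivAt (fun w => (w - c) ^ (k + 1) / (k + 1).factorial) ((x - c) ^ k / k.factorial) x := by
  refine ((((hasDerivAt_id x).sub_const c).pow (k + 1)).div_const _).congr_deriv ?_
  rw [Nat.factorial_succ]
  push_cast
  field_simp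
  simp

lemma hasDerivAt_thetaPrimitive_term (lam c x : ℝ) {k : ℕ} (hk : 1 ≤ k) :
    HasDerivAt (fun w => (w - c) ^ k / k.factorial + lam * (w - c) ^ (k + 1) / (k + 1).factorial)
      ((x - c) ^ (k - 1) * (k + lam * (x - c)) / k.factorial) x := by
  obtain ⟨m, rfl⟩ := Nat.exists_eq_add_of_le' hk
  refine (((hasDerivAt_pow_succ_sub_div_factorial c x m).add
    ((hasDerivAt_pow_succ_sub_div_factorial c x (m + 1)).const_mul lam)).congr_deriv ?_
    ).congr_of_eventuallyEq (.of_forall fun w => ?_)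
  · rw [Nat.add_sub_cancel, Nat.factorial_succ m]
    push_cast
    field_simp
    ring
  · simp only [Pi.add_apply]
    ring

noncomputable def thetaPrimitive (lam D : ℝ) (n : ℕ) (w : ℝ) : ℝ :=
  (1 - lam * D) * (lam * w +
    ∑ k ∈ Finset.Icc 1 n,
      Real.exp (-lam * (k : ℝ) * D) * (-lam) ^ k *
        ((w - (k : ℝ) * D) ^ k / (Nat.factorial k) +
          lam * (w - (k : ℝ) * D) ^ (k + 1) / (Nat.factorial (k + 1))))

noncomputable def thetaIntegrand (lam D : ℝ) (n : ℕ) (w : ℝ) : ℝ :=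
  (1 - lam * D) * (lam +
    ∑ k ∈ Finset.Icc 1 n,
      Real.exp (-lam * (k : ℝ) * D) * (-lam) ^ k *
        ((w - (k : ℝ) * D) ^ (k - 1) * ((k : ℝ) + lam * (w - (k : ℝ) * D)) /
          (Nat.factorial k)))

lemma continuous_thetaIntegrand (lam D : ℝ) (n : ℕ) : Continuous (thetaIntegrand lam D n) := by
  unfold thetaIntegrand
  fun_prop

lemma hasDerivAt_thetaPrimitive (lam D : ℝ) (n : ℕ) (x : ℝ) :
    HasDerivAt (thetaPrimitive lam D n) (thetaIntegrand lam D n x) x := by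
  have hsum := HasDerivAt.fun_sum (u := Finset.Icc 1 n) fun k hk =>
    (hasDerivAt_thetaPrimitive_term lam (k * D) x (Finset.mem_Icc.mp hk).1).const_mul
      (Real.exp (-lam * (k : ℝ) * D) * (-lam) ^ k)
  exact ((((hasDerivAt_id x).const_mul lam).congr_deriv (mul_one lam)).add hsum).const_mul _

lemma thetaPrimitive_succ_breakpoint (lam D : ℝ) (n : ℕ) :
    thetaPrimitive lam D (n + 1) ((n + 1) * D) = thetaPrimitive lam D n ((n + 1) * D) := by
  unfold thetaPrimitive
  rw [Finset.sum_Icc_succ_top (by omega : 1 ≤ n + 1)]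
  push_cast
  simp

lemma fW_mul_exp_neg (lam D x : ℝ) :
    fW lam D x * Real.exp (-lam * x) = thetaIntegrand lam D ⌊x / D⌋₊ x := by
  unfold fW thetaIntegrand
  rw [mul_assoc, add_mul, Finset.sum_mul, mul_assoc, ← Real.exp_add,
    show lam * x + -lam * x = 0 by ring, Real.exp_zero, mul_one]
  congr 2
  refine Finset.sum_congr rfl fun k _ => ?_
  rw [show -lam * (k : ℝ) * D = lam * (x - k * D) + -lam * x by ring, Real.exp_add]
  ring

theorem md1_theta_at_neg_lam_general (lam D : ℝ) (hD : 0 < D) (M : ℝ) (hM : 0 < M) :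
    ∫ w in (0:ℝ)..M, fW lam D w * Real.exp (-lam * w) =
      (1 - lam * D) * (lam * M +
        ∑ k ∈ Finset.Icc 1 ⌊M / D⌋₊,
          Real.exp (-lam * (k : ℝ) * D) * (-lam) ^ k *
            ((M - (k : ℝ) * D) ^ k / (Nat.factorial k) +
              lam * (M - (k : ℝ) * D) ^ (k + 1) / (Nat.factorial (k + 1)))) := by
  rw [integral_zero_eq_floor_pieces hD (hasDerivAt_thetaPrimitive lam D)
    (continuous_thetaIntegrand lam D) (fW_mul_exp_neg lam D)
    (thetaPrimitive_succ_breakpoint lam D) hM.le]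
  have hzero : thetaPrimitive lam D 0 0 = 0 := by simp [thetaPrimitive]
  rw [hzero, sub_zero, thetaPrimitive]

/-- value of the auxiliary function `θ(M, β) = ∫₀^M f_W(w) e^{β w} dw`
at `β = -λ`. -/
theorem md1_theta_at_neg_lam (lam D : ℝ) (hlam : 0 < lam) (hD : 0 < D)
    (hstab : lam * D < 1) (M : ℝ) (hM : 0 < M) :
    ∫ w in (0:ℝ)..M, fW lam D w * Real.exp (-lam * w) =
      (1 - lam * D) * (lam * M +
        ∑ k ∈ Finset.Icc 1 ⌊M / D⌋₊,
          Real.exp (-lam * (k : ℝ) * D) * (-lam) ^ k *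
            ((M - (k : ℝ) * D) ^ k / (Nat.factorial k) +
              lam * (M - (k : ℝ) * D) ^ (k + 1) / (Nat.factorial (k + 1)))) :=
  md1_theta_at_neg_lam_general lam D hD M hM
end

section
/- For every M > 0, one has (1 − λD) + ∫₀^M f_W(w) dw = P_W(M); that is, the value of the auxiliary function θ(M, 0) := ∫₀^M f_W(w) dw equals P_W(M) minus the atom mass 1 − λD at zero. -/
/-!
On each cell `[nD, (n+1)D]` the floor `⌊w/D⌋` is constant, so there `P_W` is a finite sum of
smooth terms whose derivative is `f_W`. At the right end of a cell the floor jumps, but the new term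
`(-λ(w - (n+1)D))^(n+1) e^{…} / (n+1)!` vanishes there, so `P_W` is continuous. Applying the
fundamental theorem of calculus cell by cell and telescoping gives `∫₀^M f_W = P_W(M) - P_W(0)`,
and `P_W(0) = 1 - λD`.
-/

open Real MeasureTheory Filter

open Set
open scoped Nat Interval

section CellwiseAntiderivative

variable {E : Type*} [NormedAddCommGroup E] [NormedSpace ℝ E] [CompleteSpace E]
  {f F G g : ℝ → E} {a b : ℝ}

theorem intervalIntegrable_and_integral_eq_sub_of_eqOn (hab : a ≤ b)
    (hG : ∀ x, HasDerivAt G (g x) x) (hg : Continuous g)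
    (hF : EqOn F G (Icc a b)) (hf : EqOn f g (Ioo a b)) :
    IntervalIntegrable f volume a b ∧ ∫ x in a..b, f x = F b - F a := by
  have hfg : g =ᵐ[volume.restrict (Ι a b)] f := by
    rw [uIoc_of_le hab, ← Measure.restrict_congr_set Ioo_ae_eq_Ioc]
    exact (ae_restrict_mem measurableSet_Ioo).mono fun x hx => (hf hx).symm
  have hgi : IntervalIntegrable g volume a b := hg.intervalIntegrable a b
  refine ⟨hgi.congr_ae hfg, ?_⟩
  rw [← intervalIntegral.integral_congr_ae_restrict hfg,
    intervalIntegral.integral_eq_sub_of_hasDerivAt (fun x _ => hG x) hgi,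
    hF (right_mem_Icc.2 hab), hF (left_mem_Icc.2 hab)]

variable {G g : ℕ → ℝ → E} {D : ℝ}

theorem intervalIntegrable_and_integral_eq_sub_of_cellwise (hD : 0 ≤ D)
    (hG : ∀ n x, HasDerivAt (G n) (g n x) x) (hg : ∀ n, Continuous (g n))
    (hF : ∀ n : ℕ, EqOn F (G n) (Icc (n * D) ((n + 1) * D)))
    (hf : ∀ n : ℕ, EqOn f (g n) (Ioo (n * D) ((n + 1) * D))) :
    ∀ (n : ℕ) {x : ℝ}, x ∈ Icc (n * D) ((n + 1) * D) →
      IntervalIntegrable f volume 0 x ∧ ∫ t in (0 : ℝ)..x, f t = F x - F 0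
  | 0, x, hx => by
    have hF₀ := hF 0
    have hf₀ := hf 0
    simp only [CharP.cast_eq_zero, zero_mul] at hx hF₀ hf₀
    exact intervalIntegrable_and_integral_eq_sub_of_eqOn hx.1 (hG 0) (hg 0)
      (hF₀.mono (Icc_subset_Icc_right hx.2)) (hf₀.mono (Ioo_subset_Ioo_right hx.2))
  | n + 1, x, hx => by
    have hFₙ := hF (n + 1)
    have hfₙ := hf (n + 1)
    push_cast at hx hFₙ hfₙ
    obtain ⟨hint₀, heq₀⟩ := intervalIntegrable_and_integral_eq_sub_of_cellwise hD hG hg hF hf n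
      (x := (n + 1) * D) ⟨mul_le_mul_of_nonneg_right (by linarith) hD, le_rfl⟩
    obtain ⟨hint₁, heq₁⟩ := intervalIntegrable_and_integral_eq_sub_of_eqOn hx.1 (hG (n + 1))
      (hg (n + 1)) (hFₙ.mono (Icc_subset_Icc_right hx.2)) (hfₙ.mono (Ioo_subset_Ioo_right hx.2))
    refine ⟨hint₀.trans hint₁, ?_⟩
    rw [← intervalIntegral.integral_add_adjacent_intervals hint₀ hint₁, heq₀, heq₁]
    abel

end CellwiseAntiderivative

theorem Nat.floor_div_eq_of_mem_Ico {D x : ℝ} {n : ℕ} (hD : 0 < D)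
    (hx : x ∈ Ico (n * D) ((n + 1) * D)) : ⌊x / D⌋₊ = n := by
  rw [Nat.floor_eq_iff (div_nonneg ((by positivity : (0 : ℝ) ≤ n * D).trans hx.1) hD.le),
    le_div_iff₀ hD, div_lt_iff₀ hD]
  exact hx

theorem mem_Icc_floor_div_mul {D x : ℝ} (hD : 0 < D) (hx : 0 ≤ x) :
    x ∈ Icc (⌊x / D⌋₊ * D) ((⌊x / D⌋₊ + 1) * D) := by
  rw [mem_Icc, ← le_div_iff₀ hD, ← div_le_iff₀ hD]
  exact ⟨Nat.floor_le (div_nonneg hx hD.le), (Nat.lt_floor_add_one _).le⟩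

namespace MD1

variable (lam D : ℝ)

noncomputable def cdfTerm (k : ℕ) (w : ℝ) : ℝ :=
  (-(lam * (w - (k : ℝ) * D))) ^ k * exp (lam * (w - (k : ℝ) * D)) / (k ! : ℝ)

noncomputable def densityTerm (k : ℕ) (w : ℝ) : ℝ :=
  (-lam) ^ k * (w - (k : ℝ) * D) ^ (k - 1) * exp (lam * (w - (k : ℝ) * D)) *
    ((k : ℝ) + lam * (w - (k : ℝ) * D)) / (k ! : ℝ)

noncomputable def PWPartial (n : ℕ) (w : ℝ) : ℝ :=
  (1 - lam * D) * ∑ k ∈ Finset.range (n + 1), cdfTerm lam D k w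

noncomputable def fWPartial (n : ℕ) (w : ℝ) : ℝ :=
  (1 - lam * D) * (lam * exp (lam * w) + ∑ k ∈ Finset.Icc 1 n, densityTerm lam D k w)

variable {lam D}

theorem hasDerivAt_cdfTerm {k : ℕ} (hk : k ≠ 0) (w : ℝ) :
    HasDerivAt (cdfTerm lam D k) (densityTerm lam D k w) w := by
  obtain ⟨m, rfl⟩ := Nat.exists_eq_add_one_of_ne_zero hk
  have hlin := ((hasDerivAt_id' w).sub_const (((m + 1 : ℕ) : ℝ) * D)).const_mul lam
  refine (((hlin.fun_neg.fun_pow (m + 1)).fun_mul hlin.exp).div_const ((m + 1)! : ℝ)).congr_deriv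
    ?_
  simp only [densityTerm, Nat.add_sub_cancel, neg_mul_eq_neg_mul, mul_pow]
  ring

theorem cdfTerm_natCast_mul_eq_zero {k : ℕ} (hk : k ≠ 0) : cdfTerm lam D k (k * D) = 0 := by
  simp [cdfTerm, hk]

theorem PWPartial_eq (n : ℕ) :
    PWPartial lam D n =
      fun w => (1 - lam * D) * (exp (lam * w) + ∑ k ∈ Finset.Icc 1 n, cdfTerm lam D k w) := by
  have hrange : Finset.range (n + 1) = insert 0 (Finset.Icc 1 n) := by
    ext k; simp only [Finset.mem_range, Finset.mem_insert, Finset.mem_Icc]; omega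
  ext w
  simp [PWPartial, hrange, cdfTerm]

theorem hasDerivAt_PWPartial (n : ℕ) (w : ℝ) :
    HasDerivAt (PWPartial lam D n) (fWPartial lam D n w) w := by
  rw [PWPartial_eq]
  have hexp : HasDerivAt (fun w => exp (lam * w)) (lam * exp (lam * w)) w := by
    simpa [mul_comm] using ((hasDerivAt_id w).const_mul lam).exp
  have hsum := HasDerivAt.fun_sum (u := Finset.Icc 1 n) fun k hk =>
    hasDerivAt_cdfTerm (lam := lam) (D := D) (Nat.one_le_iff_ne_zero.1 (Finset.mem_Icc.1 hk).1) w
  exact (hexp.add hsum).const_mul _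

theorem continuous_fWPartial (n : ℕ) : Continuous (fWPartial lam D n) := by
  unfold fWPartial densityTerm
  fun_prop

theorem PW_eq_PWPartial_floor {w : ℝ} (hw : 0 ≤ w) : PW lam D w = PWPartial lam D ⌊w / D⌋₊ w :=
  if_neg hw.not_gt

theorem PWPartial_succ (n : ℕ) (w : ℝ) :
    PWPartial lam D (n + 1) w = PWPartial lam D n w + (1 - lam * D) * cdfTerm lam D (n + 1) w := by
  rw [PWPartial, Finset.sum_range_succ, mul_add]
  rfl

theorem PW_eq_PWPartial (hD : 0 < D) {n : ℕ} {w : ℝ}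
    (hw : w ∈ Icc (n * D) ((n + 1) * D)) : PW lam D w = PWPartial lam D n w := by
  rw [PW_eq_PWPartial_floor ((by positivity : (0 : ℝ) ≤ n * D).trans hw.1)]
  rcases hw.2.lt_or_eq with hlt | rfl
  · rw [Nat.floor_div_eq_of_mem_Ico hD ⟨hw.1, hlt⟩]
  · rw [← Nat.cast_succ, mul_div_cancel_right₀ _ hD.ne', Nat.floor_natCast, PWPartial_succ,
      cdfTerm_natCast_mul_eq_zero n.succ_ne_zero, mul_zero, add_zero]

theorem fW_eq_fWPartial (hD : 0 < D) {n : ℕ} {w : ℝ}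
    (hw : w ∈ Ico (n * D) ((n + 1) * D)) : fW lam D w = fWPartial lam D n w := by
  rw [fW, Nat.floor_div_eq_of_mem_Ico hD hw]
  rfl

theorem PW_zero : PW lam D 0 = 1 - lam * D := by
  simp [PW]

end MD1

theorem md1_theta_at_zero_general (lam D : ℝ) (hD : 0 < D)
    (M : ℝ) (hM : 0 < M) :
    (1 - lam * D) + ∫ w in (0:ℝ)..M, fW lam D w = PW lam D M := by
  obtain ⟨-, hint⟩ := intervalIntegrable_and_integral_eq_sub_of_cellwise hD.le
    MD1.hasDerivAt_PWPartial MD1.continuous_fWPartial (fun _ _ hw => MD1.PW_eq_PWPartial hD hw)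
    (fun _ _ hw => MD1.fW_eq_fWPartial hD (Ioo_subset_Ico_self hw)) _
    (mem_Icc_floor_div_mul hD hM.le)
  rw [hint, MD1.PW_zero]
  ring

/-- `θ(M, 0) = ∫₀^M f_W(w) dw` equals `P_W(M)` minus the atom mass
`1 - λ D` at zero; that is, `(1 - λ D) + ∫₀^M f_W(w) dw = P_W(M)`. -/
theorem md1_theta_at_zero (lam D : ℝ) (hlam : 0 < lam) (hD : 0 < D)
    (hstab : lam * D < 1) (M : ℝ) (hM : 0 < M) :
    (1 - lam * D) + ∫ w in (0:ℝ)..M, fW lam D w = PW lam D M :=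
  md1_theta_at_zero_general lam D hD M hM
end

section
/- For every x > 0, ∫₀^x (μ₁ + α₂) e^{−(μ₁+α₂)s} · (α₂ μ₂ / λ) · ( e^{−α₂(x−s)} − e^{−μ₂(x−s)} ) ds = ( α₂ μ₂ (α₂ + μ₁) / (λ α₁ μ₁) ) · e^{−α₂ x} ( α₁ + λ e^{−μ₁ x} − μ₁ e^{−λ x} ). -/
open Real MeasureTheory

/-! The integrand is a difference of two convolutions of exponentials, and
`e^{-a s} e^{-b (x - s)} = e^{-b x} e^{-(a - b) s}` turns each into an elementary integral.
With `a = μ₁ + α₂` the two rate gaps are `a - α₂ = μ₁` and `a - μ₂ = α₁`; the closed form then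
follows from `μ₂ = α₂ + λ` and `μ₁ = α₁ + λ`. -/

theorem integral_exp_neg_mul {a : ℝ} (ha : a ≠ 0) (x : ℝ) :
    ∫ s in (0:ℝ)..x, exp (-a * s) = (1 - exp (-a * x)) / a := by
  rw [intervalIntegral.integral_comp_mul_left exp (neg_ne_zero.mpr ha), integral_exp]
  simp only [mul_zero, exp_zero, smul_eq_mul]
  field_simp
  ring

theorem integral_exp_neg_mul_mul_exp_neg_mul_sub {a b : ℝ} (hab : a ≠ b) (x : ℝ) :
    ∫ s in (0:ℝ)..x, exp (-a * s) * exp (-b * (x - s)) =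
      exp (-b * x) * ((1 - exp (-(a - b) * x)) / (a - b)) := by
  have hfactor : ∀ s, exp (-a * s) * exp (-b * (x - s)) = exp (-b * x) * exp (-(a - b) * s) := by
    intro s
    rw [← exp_add, ← exp_add]
    ring_nf
  simp_rw [hfactor]
  rw [intervalIntegral.integral_const_mul, integral_exp_neg_mul (sub_ne_zero.mpr hab)]

theorem mm1_tandem_caseA_conditional_density_general (lam μ₁ μ₂ α₁ α₂ : ℝ) (hlam : 0 < lam)
    (hμ₁ : lam < μ₁) (hα₁ : α₁ = μ₁ - lam) (hα₂ : α₂ = μ₂ - lam)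
    (x : ℝ) :
    ∫ s in (0:ℝ)..x, (μ₁ + α₂) * Real.exp (-(μ₁ + α₂) * s) * (α₂ * μ₂ / lam) *
        (Real.exp (-α₂ * (x - s)) - Real.exp (-μ₂ * (x - s))) =
      α₂ * μ₂ * (α₂ + μ₁) / (lam * α₁ * μ₁) * Real.exp (-α₂ * x) *
        (α₁ + lam * Real.exp (-μ₁ * x) - μ₁ * Real.exp (-lam * x)) := by
  set a := μ₁ + α₂
  have hexp_int :
      ∀ c : ℝ, IntervalIntegrable (fun s => exp (-a * s) * exp (-c * (x - s))) volume 0 x :=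
    fun c => by apply Continuous.intervalIntegrable; fun_prop
  have hμ₁0 : μ₁ ≠ 0 := by linarith
  have hα₁0 : α₁ ≠ 0 := by rw [hα₁]; linarith
  have hfast : a - α₂ = μ₁ := by ring
  have hslow : a - μ₂ = α₁ := by simp only [a]; linarith
  calc _ = a * (α₂ * μ₂ / lam) * ((∫ s in (0:ℝ)..x, exp (-a * s) * exp (-α₂ * (x - s))) -
          ∫ s in (0:ℝ)..x, exp (-a * s) * exp (-μ₂ * (x - s))) := by
        rw [← intervalIntegral.integral_sub (hexp_int _) (hexp_int _),
          ← intervalIntegral.integral_const_mul]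
        congr 1 with s
        ring
    _ = _ := by
        rw [integral_exp_neg_mul_mul_exp_neg_mul_sub (sub_ne_zero.mp (hfast ▸ hμ₁0)),
          integral_exp_neg_mul_mul_exp_neg_mul_sub (sub_ne_zero.mp (hslow ▸ hα₁0)), hfast, hslow]
        have hsplit_μ₂ : exp (-μ₂ * x) = exp (-α₂ * x) * exp (-lam * x) := by
          rw [← exp_add, hα₂]; ring_nf
        have hsplit_μ₁ : exp (-lam * x) * exp (-α₁ * x) = exp (-μ₁ * x) := by
          rw [← exp_add, hα₁]; ring_nf
        rw [hsplit_μ₂, ← hsplit_μ₁]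
        field_simp
        rw [hα₁]
        ring

/-- unconditioning integral giving the case-A conditional
system-time density `p_{T|Ω₁,A}(t|ω₁)` of the M/M/1 – M/M/1 tandem,
written in terms of `x = t - ω₁ > 0`. -/
theorem mm1_tandem_caseA_conditional_density (lam μ₁ μ₂ α₁ α₂ : ℝ) (hlam : 0 < lam)
    (hμ₁ : lam < μ₁) (hμ₂ : lam < μ₂) (hα₁ : α₁ = μ₁ - lam) (hα₂ : α₂ = μ₂ - lam)
    (x : ℝ) (hx : 0 < x) :
    ∫ s in (0:ℝ)..x, (μ₁ + α₂) * Real.exp (-(μ₁ + α₂) * s) * (α₂ * μ₂ / lam) *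
        (Real.exp (-α₂ * (x - s)) - Real.exp (-μ₂ * (x - s))) =
      α₂ * μ₂ * (α₂ + μ₁) / (lam * α₁ * μ₁) * Real.exp (-α₂ * x) *
        (α₁ + lam * Real.exp (-μ₁ * x) - μ₁ * Real.exp (-lam * x)) :=
  mm1_tandem_caseA_conditional_density_general lam μ₁ μ₂ α₁ α₂ hlam hμ₁ hα₁ hα₂ x
end

section
/- Assume in addition μ₁ ≠ μ₂ and μ₂ ≠ α₁. Then ∫₀^∞ λ e^{−α₁ t} [ 1 − e^{−μ₂ t} + α₁ μ₂ (1 − e^{−λ t})/(λ(μ₂ − μ₁)) − α₂ μ₂ (1 − e^{−(μ₂ − α₁) t})/((μ₂ − μ₁)(μ₂ − α₁)) ] dt = λ α₂ / ( μ₁ (μ₁ + α₂) ). Equivalently, the case-B system-time density p_{T|B}(t) = (λ e^{−α₁ t}/p(B)) · [bracket](t), with p(B) = λα₂/(μ₁(μ₁+α₂)), integrates to one over (0, ∞). -/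
/-!
Since `α₁ + λ = μ₁` and `α₁ + (μ₂ - α₁) = μ₂`, multiplying out turns the integrand into the
exponential polynomial
`(λ + c₂ - c₃) e^{-α₁ t} - λ e^{-(α₁ + μ₂) t} - c₂ e^{-μ₁ t} + c₃ e^{-μ₂ t}`
with `c₂ = α₁ μ₂ / (μ₂ - μ₁)` and `c₃ = λ α₂ μ₂ / ((μ₂ - μ₁) (μ₂ - α₁))`. All four rates are
positive, so each term integrates over `(0, ∞)` to its coefficient divided by its rate, and what
remains is a rational identity in `λ, μ₁, μ₂`.
-/

open Real MeasureTheory Set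

theorem integral_exp_neg_mul_Ioi_zero {b : ℝ} (hb : 0 < b) :
    ∫ t in Ioi (0 : ℝ), exp (-b * t) = 1 / b := by
  rw [integral_exp_mul_Ioi (neg_neg_of_pos hb), mul_zero, exp_zero, neg_div_neg_eq]

theorem integral_sum_mul_exp_neg_mul_Ioi_zero {ι : Type*} (s : Finset ι) (c b : ι → ℝ)
    (hb : ∀ i ∈ s, 0 < b i) :
    ∫ t in Ioi (0 : ℝ), ∑ i ∈ s, c i * exp (-b i * t) = ∑ i ∈ s, c i / b i := by
  rw [integral_finsetSum s fun i hi => (exp_neg_integrableOn_Ioi 0 (hb i hi)).const_mul (c i)]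
  refine Finset.sum_congr rfl fun i hi => ?_
  rw [integral_const_mul, integral_exp_neg_mul_Ioi_zero (hb i hi), mul_one_div]

theorem mm1_tandem_caseB_integrand_eq (lam μ₁ μ₂ α₁ α₂ t : ℝ) (hlam : lam ≠ 0)
    (hα₁ : α₁ = μ₁ - lam) (hd : μ₂ - μ₁ ≠ 0) (he : μ₂ - α₁ ≠ 0) :
    lam * exp (-α₁ * t) *
        (1 - exp (-μ₂ * t) + α₁ * μ₂ * (1 - exp (-lam * t)) / (lam * (μ₂ - μ₁)) -
          α₂ * μ₂ * (1 - exp (-(μ₂ - α₁) * t)) / ((μ₂ - μ₁) * (μ₂ - α₁))) =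
      ∑ i : Fin 4,
        ![lam + α₁ * μ₂ / (μ₂ - μ₁) - lam * α₂ * μ₂ / ((μ₂ - μ₁) * (μ₂ - α₁)), -lam,
            -(α₁ * μ₂ / (μ₂ - μ₁)), lam * α₂ * μ₂ / ((μ₂ - μ₁) * (μ₂ - α₁))] i *
          exp (-![α₁, α₁ + μ₂, μ₁, μ₂] i * t) := by
  have exp_add_rates : ∀ a b : ℝ, exp (-(a + b) * t) = exp (-a * t) * exp (-b * t) := by
    intro a b; rw [← exp_add]; ring_nf
  have exp_μ₁ : exp (-μ₁ * t) = exp (-α₁ * t) * exp (-lam * t) := by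
    rw [← exp_add_rates, hα₁, sub_add_cancel]
  have exp_μ₂ : exp (-μ₂ * t) = exp (-α₁ * t) * exp (-(μ₂ - α₁) * t) := by
    rw [← exp_add_rates, add_sub_cancel]
  simp only [Fin.sum_univ_four, Matrix.cons_val]
  rw [exp_add_rates, exp_μ₁, exp_μ₂]
  field_simp
  ring

/-- the case-B system-time density of the M/M/1 – M/M/1 tandem
integrates to one; equivalently, the integral of `λ e^{-α₁ t}` times the bracket
equals `λ α₂ / (μ₁ (μ₁ + α₂))`. -/
theorem mm1_tandem_caseB_density_normalized (lam μ₁ μ₂ α₁ α₂ : ℝ) (hlam : 0 < lam)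
    (hμ₁ : lam < μ₁) (hμ₂ : lam < μ₂) (hα₁ : α₁ = μ₁ - lam) (hα₂ : α₂ = μ₂ - lam)
    (hne : μ₁ ≠ μ₂) (hne' : μ₂ ≠ α₁) :
    ∫ t in Set.Ioi (0:ℝ),
        lam * Real.exp (-α₁ * t) *
          (1 - Real.exp (-μ₂ * t) +
            α₁ * μ₂ * (1 - Real.exp (-lam * t)) / (lam * (μ₂ - μ₁)) -
            α₂ * μ₂ * (1 - Real.exp (-(μ₂ - α₁) * t)) / ((μ₂ - μ₁) * (μ₂ - α₁))) =
      lam * α₂ / (μ₁ * (μ₁ + α₂)) := by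
  have hd : μ₂ - μ₁ ≠ 0 := sub_ne_zero.mpr hne.symm
  have he : μ₂ - α₁ ≠ 0 := sub_ne_zero.mpr hne'
  have rates_pos : ∀ i ∈ Finset.univ, 0 < ![α₁, α₁ + μ₂, μ₁, μ₂] i := by
    intro i _
    fin_cases i <;>
      simp only [Fin.zero_eta, Fin.mk_one, Fin.reduceFinMk, Matrix.cons_val] <;> linarith
  rw [setIntegral_congr_fun measurableSet_Ioi fun t _ =>
      mm1_tandem_caseB_integrand_eq lam μ₁ μ₂ α₁ α₂ t hlam.ne' hα₁ hd he,
    integral_sum_mul_exp_neg_mul_Ioi_zero _ _ _ rates_pos]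
  simp only [Fin.sum_univ_four, Matrix.cons_val]
  subst hα₁ hα₂
  have : μ₁ ≠ 0 := by linarith
  have : μ₂ ≠ 0 := by linarith
  have : μ₁ - lam ≠ 0 := by linarith
  have : μ₁ - lam + μ₂ ≠ 0 := by linarith
  have : μ₁ + (μ₂ - lam) ≠ 0 := by linarith
  field_simp
  ring
end

section
/- For every M > 0, one has ∫₀^M P_W(w) dw = ((1 − λD)/λ) · Σ_{k=0}^{⌊M/D⌋} ( e^{λ(M−kD)} · Σ_{i=0}^{k} (−λ(M−kD))^i / i! − 1 ). -/
open Real MeasureTheory Filter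

/-! Every summand of `P_W` is switched on at `w = kD`, so
`∫₀^M P_W = (1 - λD) Σ_{kD ≤ M} ∫_{kD}^M (-λ(w - kD))^k e^{λ(w - kD)} / k! dw`.
After the shift `w ↦ w - kD`, the integrand `(-λw)^k e^{λw} / k!` has the explicit primitive
`λ⁻¹ e^{λw} Σ_{i ≤ k} (-λw)^i / i!`: differentiating the truncated exponential series
`Σ_{i ≤ k} y^i / i!` drops its top term, and the product rule leaves only that term. -/

open Finset Set Nat

theorem hasDerivAt_sum_range_pow_div_factorial (k : ℕ) (y : ℝ) :
    HasDerivAt (fun y => ∑ i ∈ range (k + 1), y ^ i / (i ! : ℝ))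
      (∑ i ∈ range k, y ^ i / (i ! : ℝ)) y := by
  induction k with
  | zero => simpa using hasDerivAt_const y (1 : ℝ)
  | succ k ih =>
    have hterm : HasDerivAt (fun y => y ^ (k + 1) / ((k + 1)! : ℝ)) (y ^ k / k !) y :=
      ((hasDerivAt_pow (k + 1) y).div_const _).congr_deriv (by
        rw [factorial_succ]; push_cast; field_simp)
    simp only [sum_range_succ _ (k + 1)]
    rw [sum_range_succ _ k]
    exact ih.add hterm

theorem hasDerivAt_exp_mul_sum_range_pow_div_factorial (a : ℝ) (k : ℕ) (x : ℝ) :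
    HasDerivAt (fun x => exp (a * x) * ∑ i ∈ range (k + 1), (-(a * x)) ^ i / (i ! : ℝ))
      (a * ((-(a * x)) ^ k * exp (a * x) / k !)) x := by
  have hexp : HasDerivAt (fun x => exp (a * x)) (exp (a * x) * a) x :=
    ((hasDerivAt_id x).const_mul a).exp.congr_deriv (by simp)
  have hneg : HasDerivAt (fun x => -(a * x)) (-a) x :=
    ((hasDerivAt_id x).const_mul a).neg.congr_deriv (by simp)
  refine (hexp.mul ((hasDerivAt_sum_range_pow_div_factorial k _).comp x hneg)).congr_deriv ?_
  simp only [Function.comp_apply, sum_range_succ]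
  ring

theorem integral_pow_mul_exp_div_factorial {a : ℝ} (ha : a ≠ 0) (x : ℝ) (k : ℕ) :
    ∫ w in (0 : ℝ)..x, (-(a * w)) ^ k * exp (a * w) / k ! =
      a⁻¹ * (exp (a * x) * ∑ i ∈ range (k + 1), (-(a * x)) ^ i / (i ! : ℝ) - 1) := by
  have hderiv : ∀ w ∈ uIcc 0 x, HasDerivAt
      (fun w => a⁻¹ * (exp (a * w) * ∑ i ∈ range (k + 1), (-(a * w)) ^ i / (i ! : ℝ)))
      ((-(a * w)) ^ k * exp (a * w) / k !) w := fun w _ =>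
    ((hasDerivAt_exp_mul_sum_range_pow_div_factorial a k w).const_mul a⁻¹).congr_deriv
      (by field_simp)
  rw [intervalIntegral.integral_eq_sub_of_hasDerivAt hderiv
    (Continuous.intervalIntegrable (by fun_prop) _ _)]
  simp [sum_range_succ']
  ring

theorem integral_indicator_Ici_of_le (g : ℝ → ℝ) {a b c : ℝ} (hac : a ≤ c) (hcb : c ≤ b) :
    ∫ w in a..b, (Ici c).indicator g w = ∫ w in c..b, g w := by
  rw [intervalIntegral.integral_of_le (hac.trans hcb), intervalIntegral.integral_of_le hcb]
  calc ∫ w in Ioc a b, (Ici c).indicator g w = ∫ w in Ioc a b, (Ioi c).indicator g w :=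
        integral_congr_ae (ae_restrict_of_ae (indicator_ae_eq_of_ae_eq_set Ioi_ae_eq_Ici).symm)
    _ = ∫ w in Ioc a b ∩ Ioi c, g w := setIntegral_indicator measurableSet_Ioi
    _ = ∫ w in Ioc c b, g w := by rw [Ioc_inter_Ioi, max_eq_right hac]

section FloorSum

variable {D : ℝ} (hD : 0 < D)
include hD

theorem natCast_mul_le_iff_le_floor_div {w : ℝ} (hw : 0 ≤ w) (k : ℕ) :
    (k : ℝ) * D ≤ w ↔ k ≤ ⌊w / D⌋₊ := by
  rw [Nat.le_floor_iff (div_nonneg hw hD.le), le_div_iff₀ hD]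

theorem sum_range_floor_div_eq_sum_indicator (g : ℕ → ℝ → ℝ) {w M : ℝ} (hw : 0 ≤ w)
    (hwM : w ≤ M) :
    ∑ k ∈ range (⌊w / D⌋₊ + 1), g k w =
      ∑ k ∈ range (⌊M / D⌋₊ + 1), (Ici ((k : ℝ) * D)).indicator (g k) w := by
  have hmem : ∀ k : ℕ, w ∈ Ici ((k : ℝ) * D) ↔ k ∈ range (⌊w / D⌋₊ + 1) := fun k => by
    rw [Set.mem_Ici, natCast_mul_le_iff_le_floor_div hD hw, Finset.mem_range, Nat.lt_succ_iff]
  refine sum_subset_zero_on_sdiff ?_ (fun k hk => ?_) (fun k hk => ?_)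
  · exact range_subset_range.mpr (Nat.succ_le_succ (Nat.floor_le_floor (by gcongr)))
  · exact indicator_of_notMem (fun h => (mem_sdiff.mp hk).2 ((hmem k).mp h)) _
  · exact (indicator_of_mem ((hmem k).mpr hk) _).symm

theorem integral_sum_range_floor_div {M : ℝ} (hM : 0 ≤ M) (g : ℕ → ℝ → ℝ)
    (hg : ∀ k, IntervalIntegrable (g k) volume 0 M) :
    ∫ w in (0 : ℝ)..M, ∑ k ∈ range (⌊w / D⌋₊ + 1), g k w =
      ∑ k ∈ range (⌊M / D⌋₊ + 1), ∫ w in (k : ℝ) * D..M, g k w := by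
  have hsplit : ∀ w ∈ uIcc 0 M, ∑ k ∈ range (⌊w / D⌋₊ + 1), g k w =
      ∑ k ∈ range (⌊M / D⌋₊ + 1), (Ici ((k : ℝ) * D)).indicator (g k) w := fun w hw => by
    rw [uIcc_of_le hM] at hw
    exact sum_range_floor_div_eq_sum_indicator hD g hw.1 hw.2
  have hint : ∀ k : ℕ, IntervalIntegrable ((Ici ((k : ℝ) * D)).indicator (g k)) volume 0 M :=
    fun k => intervalIntegrable_iff.mpr ((intervalIntegrable_iff.mp (hg k)).indicator measurableSet_Ici)
  rw [intervalIntegral.integral_congr hsplit, intervalIntegral.integral_finsetSum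
    fun k _ => hint k]
  refine sum_congr rfl fun k hk => integral_indicator_Ici_of_le _ (by positivity) ?_
  rw [natCast_mul_le_iff_le_floor_div hD hM]
  exact Nat.lt_succ_iff.mp (Finset.mem_range.mp hk)

end FloorSum

theorem md1_cdf_integral_general (lam D : ℝ) (hlam : 0 < lam) (hD : 0 < D)
    (M : ℝ) (hM : 0 < M) :
    ∫ w in (0:ℝ)..M, PW lam D w =
      ((1 - lam * D) / lam) * ∑ k ∈ Finset.range (⌊M / D⌋₊ + 1),
        (Real.exp (lam * (M - (k : ℝ) * D)) *
            ∑ i ∈ Finset.range (k + 1),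
              (-(lam * (M - (k : ℝ) * D))) ^ i / (Nat.factorial i) - 1) := by
  have hPW : ∀ w ∈ uIcc 0 M, PW lam D w = (1 - lam * D) * ∑ k ∈ range (⌊w / D⌋₊ + 1),
      (-(lam * (w - k * D))) ^ k * exp (lam * (w - k * D)) / k ! := fun w hw => by
    rw [uIcc_of_le hM.le] at hw
    rw [PW, if_neg (not_lt.mpr hw.1)]
  rw [intervalIntegral.integral_congr hPW, intervalIntegral.integral_const_mul,
    integral_sum_range_floor_div hD hM.le _
      fun k => Continuous.intervalIntegrable (by fun_prop) _ _, mul_sum, mul_sum]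
  refine sum_congr rfl fun k _ => ?_
  rw [intervalIntegral.integral_comp_sub_right
      (fun w => (-(lam * w)) ^ k * exp (lam * w) / k !) ((k : ℝ) * D), sub_self,
    integral_pow_mul_exp_div_factorial hlam.ne', div_eq_mul_inv, mul_assoc]

/-- `∫₀^M P_W(w) dw
= ((1 - λD)/λ) Σ_{k=0}^{⌊M/D⌋} ( e^{λ(M - kD)} Σ_{i=0}^{k} (-λ(M - kD))^i / i! - 1 )`. -/
theorem md1_cdf_integral (lam D : ℝ) (hlam : 0 < lam) (hD : 0 < D)
    (hstab : lam * D < 1) (M : ℝ) (hM : 0 < M) :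
    ∫ w in (0:ℝ)..M, PW lam D w =
      ((1 - lam * D) / lam) * ∑ k ∈ Finset.range (⌊M / D⌋₊ + 1),
        (Real.exp (lam * (M - (k : ℝ) * D)) *
            ∑ i ∈ Finset.range (k + 1),
              (-(lam * (M - (k : ℝ) * D))) ^ i / (Nat.factorial i) - 1) :=
  md1_cdf_integral_general lam D hlam hD M hM
end
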